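/- For every real q > 2, the derivative of β_c satisfies β_c'(q) > β_c(q)/(q(q-1)), where β_c(q) = 2(q-1)/(q-2) · log(q-1). -/

import Mathlib

/-- Mean-field Potts critical inverse temperature for `q > 2`. -/
noncomputable def betac (q : ℝ) : ℝ := 2 * (q - 1) / (q - 2) * Real.log (q - 1)

/-! With `t = q - 1 > 1`, clearing the positive denominators turns the inequality into
`2 t log t < t² - 1`, i.e. `log t < sinh (log t)`, which is `y < sinh y` for `y = log t > 0`. -/

open Real

theorem Real.log_lt_sub_inv_div_two {x : ℝ} (hx : 1 < x) : log x < (x - x⁻¹) / 2 := by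
  simpa only [sinh_log (zero_lt_one.trans hx)] using self_lt_sinh_iff.2 (log_pos hx)

theorem Real.two_mul_mul_log_lt_sq_sub_one {x : ℝ} (hx : 1 < x) :
    2 * x * log x < x ^ 2 - 1 := by
  have hx0 : 0 < x := zero_lt_one.trans hx
  calc 2 * x * log x < 2 * x * ((x - x⁻¹) / 2) := by gcongr; exact log_lt_sub_inv_div_two hx
    _ = x ^ 2 - 1 := by field_simp

theorem hasDerivAt_betac {q : ℝ} (hq : 2 < q) :
    HasDerivAt betac (2 / (q - 2) - 2 * log (q - 1) / (q - 2) ^ 2) q := by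
  have hq1 : q - 1 ≠ 0 := by linarith
  have hq2 : q - 2 ≠ 0 := by linarith
  have hfrac : HasDerivAt (fun x => 2 * (x - 1) / (x - 2))
      ((2 * 1 * (q - 2) - 2 * (q - 1) * 1) / (q - 2) ^ 2) q :=
    (((hasDerivAt_id q).sub_const 1).const_mul 2).div ((hasDerivAt_id q).sub_const 2) hq2
  have hlog : HasDerivAt (fun x => log (x - 1)) ((q - 1)⁻¹) q := by
    simpa using ((hasDerivAt_id q).sub_const 1).log hq1
  refine (hfrac.mul hlog).congr_deriv ?_
  field_simp
  ring

/-- For every real `q > 2`, `β_c'(q) > β_c(q)/(q(q-1))`. -/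
theorem deriv_betac_gt (q : ℝ) (hq : 2 < q) :
    deriv betac q > betac q / (q * (q - 1)) := by
  have hq1 : 0 < q - 1 := by linarith
  have hq2 : 0 < q - 2 := by linarith
  have key := two_mul_mul_log_lt_sq_sub_one (show 1 < q - 1 by linarith)
  have hdiff : 2 / (q - 2) - 2 * log (q - 1) / (q - 2) ^ 2
      - 2 * (q - 1) / (q - 2) * log (q - 1) / (q * (q - 1))
      = 2 * ((q - 1) ^ 2 - 1 - 2 * (q - 1) * log (q - 1)) / (q * (q - 2) ^ 2) := by
    field_simp
    ring
  have hpos : 0 < 2 * ((q - 1) ^ 2 - 1 - 2 * (q - 1) * log (q - 1)) / (q * (q - 2) ^ 2) :=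
    div_pos (by linarith) (by positivity)
  rw [(hasDerivAt_betac hq).deriv, gt_iff_lt, betac]
  linarith
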